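/- arXiv:2211.01164 — 7 statements merged into one kernel-verified Lean document; each statement's English description precedes it below -/
import Mathlib

section
/- Let n ≥ 2 and consider the set {1, ..., n} with its standard order. There is exactly one pair of relations (Perm, Pred) on {1,...,n} satisfying: (a) Perm is irreflexive; (b) Perm is a bijective function (every element has exactly one Perm-successor and exactly one Perm-predecessor); (c) Pred ⊆ Perm; (d) Pred(x,y) implies x ≤ y; (e) Pred has exactly n-1 pairs. Moreover, in this unique solution, Pred(x,y) holds iff y = x+1, and Perm is the cyclic successor (Perm(x, x+1) for x < n, and Perm(n, 1)). -/
/-!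
`Perm` is the graph of a permutation `σ`, and `Pred` is a set of strictly increasing pairs inside
that graph, so `Pred x (σ x)` fails at the last element; having `n - 1` pairs, it holds at every
other element. Hence `x < σ x` for all but the last element. As `σ` preserves `∑ x`, each of
these moves up by exactly one and the last element goes to `0`: `σ` is the rotation `finRotate`.
-/

open Function Finset

lemma Nat.card_subtype_prod_eq_of_imp_eq {α β : Type*} {R : α → β → Prop} {f : α → β}
    (hR : ∀ x y, R x y → f x = y) :
    Nat.card {q : α × β // R q.1 q.2} = Nat.card {x // R x (f x)} :=
  Nat.card_congr
    { toFun := fun q => ⟨q.1.1, (hR _ _ q.2).symm ▸ q.2⟩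
      invFun := fun x => ⟨(x.1, f x.1), x.2⟩
      left_inv := fun q => Subtype.ext (Prod.ext rfl (hR _ _ q.2))
      right_inv := fun _ => rfl }

lemma forall_ne_of_nat_card_eq_card_sub_one {α : Type*} [Fintype α] {p : α → Prop} {a : α}
    (ha : ¬ p a) (hcard : Nat.card {x // p x} = Fintype.card α - 1) :
    ∀ x ≠ a, p x := by
  classical
  have hsub : univ.filter p ⊆ univ.erase a := fun x hx =>
    mem_erase.2 ⟨fun hxa => ha (hxa ▸ (mem_filter.1 hx).2), mem_univ x⟩
  have heq := eq_of_subset_of_card_le hsub <| by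
    rw [card_erase_of_mem (mem_univ a), card_univ, ← hcard, Nat.card_eq_fintype_card,
      Fintype.card_subtype]
  intro x hx
  exact (mem_filter.1 (heq ▸ mem_erase.2 ⟨hx, mem_univ x⟩)).2

theorem eq_finRotate_of_lt_apply {m : ℕ} {f : Fin (m + 1) → Fin (m + 1)} (hf : Bijective f)
    (h : ∀ x ≠ Fin.last m, x < f x) : f = finRotate (m + 1) := by
  have hle : ∀ i ∈ (univ : Finset (Fin m)), (i : ℕ) + 1 ≤ f i.castSucc :=
    fun i _ => h _ (Fin.castSucc_ne_last i)
  have hsum := hf.sum_comp (fun x => (x : ℕ))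
  rw [Fin.sum_univ_castSucc, Fin.sum_univ_castSucc] at hsum
  have hsucc : ∑ i : Fin m, ((i : ℕ) + 1) = ∑ i : Fin m, (i : ℕ) + m := by
    simp [sum_add_distrib]
  have hmono := sum_le_sum hle
  simp only [Fin.val_castSucc, Fin.val_last] at hsum
  -- `∑ f = ∑ id` while `∑_{i<m} f i ≥ ∑_{i<m} i + m`: `f (last m) = 0` and the bound is tight.
  have hlast : (f (Fin.last m) : ℕ) = 0 := by omega
  have hinit := (sum_eq_sum_iff_of_le hle).1 (by omega)
  funext x
  induction x using Fin.lastCases with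
  | last => exact Fin.ext (by rw [hlast, finRotate_last, Fin.val_zero])
  | cast i =>
    rw [Fin.ext_iff, coe_finRotate_of_ne_last (Fin.castSucc_ne_last i), ← hinit i (mem_univ i)]
    rfl

lemma finRotate_eq_iff_val {m : ℕ} {x y : Fin (m + 1)} :
    finRotate (m + 1) x = y ↔ (y : ℕ) = x + 1 ∨ ((x : ℕ) = m ∧ (y : ℕ) = 0) := by
  rw [Fin.ext_iff, coe_finRotate]
  split_ifs with hx
  · subst hx
    have := y.isLt
    simp only [Fin.val_last, true_and]
    omega
  · have := Fin.val_lt_last hx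
    omega

lemma finRotate_eq_and_ne_last_iff_val {m : ℕ} {x y : Fin (m + 1)} :
    finRotate (m + 1) x = y ∧ x ≠ Fin.last m ↔ (y : ℕ) = x + 1 := by
  rw [finRotate_eq_iff_val, Ne, Fin.ext_iff, Fin.val_last]
  have := y.isLt
  omega

def PermPredAxioms (n : ℕ) (Perm Pred : Fin n → Fin n → Prop) : Prop :=
  (∀ x, ¬ Perm x x) ∧
  (∀ x, ∃! y, Perm x y) ∧
  (∀ y, ∃! x, Perm x y) ∧
  (∀ x y, Pred x y → Perm x y) ∧
  (∀ x y, Pred x y → x ≤ y) ∧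
  Nat.card {q : Fin n × Fin n // Pred q.1 q.2} = n - 1

theorem permPredAxioms_finRotate {m : ℕ} (hm : m ≠ 0) :
    PermPredAxioms (m + 1) (finRotate (m + 1) · = ·)
      (fun x y => finRotate (m + 1) x = y ∧ x ≠ Fin.last m) := by
  refine ⟨fun x hx => ?_, fun x => existsUnique_eq', fun y => ?_, fun x y h => h.1,
    fun x y h => ?_, ?_⟩
  · have := finRotate_eq_iff_val.1 hx
    omega
  · exact (finRotate (m + 1)).bijective.existsUnique y
  · exact h.1 ▸ ((lt_finRotate_iff_ne_last x).2 h.2).le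
  · have hgraph := Nat.card_subtype_prod_eq_of_imp_eq
      (R := fun x y => finRotate (m + 1) x = y ∧ x ≠ Fin.last m) fun _ _ h => h.1
    exact hgraph.trans (by simp)

theorem PermPredAxioms.eq_finRotate {m : ℕ} {Perm Pred : Fin (m + 1) → Fin (m + 1) → Prop}
    (h : PermPredAxioms (m + 1) Perm Pred) :
    Perm = (finRotate (m + 1) · = ·) ∧
      Pred = fun x y => finRotate (m + 1) x = y ∧ x ≠ Fin.last m := by
  obtain ⟨hirr, hfun, hinj, hsub, hle, hcard⟩ := h
  obtain ⟨f, rfl⟩ := forall_existsUnique_iff'.1 hfun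
  have hf : Bijective f := (bijective_iff_existsUnique f).2 hinj
  have hlt : ∀ x y, Pred x y → x < y := fun x y hxy =>
    (hle x y hxy).lt_of_ne fun e => hirr x ((hsub x y hxy).trans e.symm)
  have hpred : ∀ x ≠ Fin.last m, Pred x (f x) := by
    refine forall_ne_of_nat_card_eq_card_sub_one
      (fun h => (hlt _ _ h).not_ge (Fin.le_last _)) ?_
    rw [← Nat.card_subtype_prod_eq_of_imp_eq hsub, hcard, Fintype.card_fin]
  obtain rfl := eq_finRotate_of_lt_apply hf fun x hx => hlt _ _ (hpred x hx)
  refine ⟨rfl, funext₂ fun x y => propext ⟨fun hxy => ⟨hsub x y hxy, ?_⟩, ?_⟩⟩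
  · exact Fin.ne_last_of_lt (hlt x y hxy)
  · rintro ⟨rfl, hx⟩
    exact hpred x hx

/-- On `{1,...,n}` (modeled as `Fin n` with element `i` representing `i+1`), there is exactly
one pair of relations `(Perm, Pred)` satisfying the predecessor-theory axioms, and that unique
pair is the immediate-successor relation together with the cyclic successor. -/
theorem stmt4 (n : ℕ) (hn : 2 ≤ n) :
    (∃! P : (Fin n → Fin n → Prop) × (Fin n → Fin n → Prop),
      (∀ x, ¬ P.1 x x) ∧
      (∀ x, ∃! y, P.1 x y) ∧
      (∀ y, ∃! x, P.1 x y) ∧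
      (∀ x y, P.2 x y → P.1 x y) ∧
      (∀ x y, P.2 x y → x ≤ y) ∧
      Nat.card {q : Fin n × Fin n // P.2 q.1 q.2} = n - 1) ∧
    (∀ P : (Fin n → Fin n → Prop) × (Fin n → Fin n → Prop),
      ((∀ x, ¬ P.1 x x) ∧
       (∀ x, ∃! y, P.1 x y) ∧
       (∀ y, ∃! x, P.1 x y) ∧
       (∀ x y, P.2 x y → P.1 x y) ∧
       (∀ x y, P.2 x y → x ≤ y) ∧
       Nat.card {q : Fin n × Fin n // P.2 q.1 q.2} = n - 1) →
      ((∀ x y : Fin n, P.2 x y ↔ (y : ℕ) = (x : ℕ) + 1) ∧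
       (∀ x y : Fin n, P.1 x y ↔
         ((y : ℕ) = (x : ℕ) + 1 ∨ ((x : ℕ) = n - 1 ∧ (y : ℕ) = 0))))) := by
  obtain ⟨m, rfl⟩ : ∃ m, n = m + 1 := ⟨n - 1, by omega⟩
  refine ⟨⟨((finRotate (m + 1) · = ·), fun x y => finRotate (m + 1) x = y ∧ x ≠ Fin.last m),
    permPredAxioms_finRotate (by omega), fun P hP => ?_⟩, fun P hP => ?_⟩
  · obtain ⟨hPerm, hPred⟩ := PermPredAxioms.eq_finRotate hP
    exact Prod.ext hPerm hPred
  · obtain ⟨hPerm, hPred⟩ := PermPredAxioms.eq_finRotate hP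
    rw [hPerm, hPred, Nat.add_sub_cancel]
    exact ⟨fun _ _ => finRotate_eq_and_ne_last_iff_val, fun _ _ => finRotate_eq_iff_val⟩
end

section
/- Let n ≥ 4. Define σ on {1,...,n} by σ(i) = i+2 for i ≤ n-2, σ(n-1) = 1 and σ(n) = 2 if n is even, σ(n-1) = 2 and σ(n) = 1 if n is odd. Then σ is a fixed-point-free permutation of {1,...,n}, exactly two elements x satisfy σ(x) < x, and σ decomposes into exactly two cycles: one of length ⌊n/2⌋ and one of length ⌈n/2⌉. -/
/-!
Up to the shift `i ↦ i - 1`, `σ` sends `x` to `x + 2` while that stays below `n` and otherwise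
back to `x % 2`. It therefore preserves parity and runs through the even and the odd residues
in increasing order, one cycle each, of lengths `⌈n/2⌉` and `⌊n/2⌋`. The only descents are the
two wrap-arounds at `n - 2` and `n - 1`.
-/

open Equiv

theorem List.cycleType_formPerm_of_nodup {α : Type*} [DecidableEq α] [Fintype α]
    {l : List α} (hl : l.Nodup) (hlen : 2 ≤ l.length) :
    l.formPerm.cycleType = {l.length} := by
  have hne : ∀ x, l ≠ [x] := by rintro x rfl; simp at hlen
  rw [(List.isCycle_formPerm hl hlen).cycleType, List.support_formPerm_of_nodup _ hl hne,
    List.card_toFinset, hl.dedup]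

def parityList (n r : ℕ) : List (Fin n) :=
  List.ofFn fun j : Fin ((n + 1 - r) / 2) => ⟨2 * j + r, by omega⟩

namespace parityList

variable {n r : ℕ}

theorem length_eq : (parityList n r).length = (n + 1 - r) / 2 := by
  simp [parityList]

theorem nodup : (parityList n r).Nodup :=
  List.nodup_ofFn.mpr fun i j h => Fin.ext (by simpa using congrArg Fin.val h)

theorem mem_iff (hr : r < 2) {x : Fin n} : x ∈ parityList n r ↔ (x : ℕ) % 2 = r := by
  simp only [parityList, List.mem_ofFn]
  constructor
  · rintro ⟨j, rfl⟩
    simp; omega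
  · intro hx
    exact ⟨⟨x / 2, by omega⟩, Fin.ext (by simp; omega)⟩

theorem formPerm_apply (hr : r < 2) {x : Fin n} (hx : (x : ℕ) % 2 = r) :
    ((parityList n r).formPerm x : ℕ) = if (x : ℕ) + 2 < n then (x : ℕ) + 2 else r := by
  have hj : (x : ℕ) / 2 < (parityList n r).length := by rw [length_eq]; omega
  have hx_get : (parityList n r)[(x : ℕ) / 2] = x := Fin.ext (by simp [parityList]; omega)
  rw [← hx_get, List.formPerm_apply_getElem _ nodup]
  simp only [parityList, List.getElem_ofFn, List.length_ofFn]
  rcases Nat.lt_or_ge ((x : ℕ) / 2 + 1) ((n + 1 - r) / 2) with hlt | hge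
  · rw [Nat.mod_eq_of_lt hlt]
    split_ifs <;> omega
  · rw [show (x : ℕ) / 2 + 1 = (n + 1 - r) / 2 by omega, Nat.mod_self]
    split_ifs <;> omega

theorem cycleType_formPerm (h : 4 ≤ n + 1 - r) :
    (parityList n r).formPerm.cycleType = {(n + 1 - r) / 2} := by
  rw [List.cycleType_formPerm_of_nodup nodup (by rw [length_eq]; omega), length_eq]

end parityList

def shiftTwo (n : ℕ) : Perm (Fin n) :=
  (parityList n 0).formPerm * (parityList n 1).formPerm

theorem shiftTwo_apply (n : ℕ) (x : Fin n) :
    (shiftTwo n x : ℕ) = if (x : ℕ) + 2 < n then (x : ℕ) + 2 else (x : ℕ) % 2 := by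
  have notMem {r : ℕ} (hr : r < 2) {y : Fin n} (hy : (y : ℕ) % 2 ≠ r) :
      (parityList n r).formPerm y = y :=
    List.formPerm_apply_of_notMem (mt (parityList.mem_iff hr).mp hy)
  rcases Nat.mod_two_eq_zero_or_one x with h0 | h1
  · rw [shiftTwo, Perm.mul_apply, notMem one_lt_two (by omega),
      parityList.formPerm_apply two_pos h0, h0]
  · have hodd := parityList.formPerm_apply one_lt_two h1
    rw [shiftTwo, Perm.mul_apply, notMem two_pos (by split_ifs at hodd <;> omega), hodd, h1]

theorem cycleType_shiftTwo {n : ℕ} (hn : 4 ≤ n) :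
    (shiftTwo n).cycleType = {n / 2, (n + 1) / 2} := by
  have hdisj : (parityList n 0).formPerm.Disjoint (parityList n 1).formPerm := by
    rw [List.formPerm_disjoint_iff parityList.nodup parityList.nodup
      (by rw [parityList.length_eq]; omega) (by rw [parityList.length_eq]; omega)]
    intro x h0 h1
    rw [parityList.mem_iff two_pos] at h0
    rw [parityList.mem_iff one_lt_two] at h1
    omega
  rw [shiftTwo, hdisj.cycleType_mul, parityList.cycleType_formPerm (by omega),
    parityList.cycleType_formPerm (by omega), Multiset.pair_comm]
  rfl

/-- For `n ≥ 4`, the map on `{1,...,n}` (as `Fin n`, element `i` representing `i+1`) sending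
`i ↦ i+2` for `i ≤ n-2`, with `n-1 ↦ 1, n ↦ 2` for even `n` and `n-1 ↦ 2, n ↦ 1` for odd `n`,
is a fixed-point-free permutation with exactly two descents, decomposing into exactly two
cycles of lengths `⌊n/2⌋` and `⌈n/2⌉`. -/
theorem stmt7 (n : ℕ) (hn : 4 ≤ n) (σ : Fin n → Fin n)
    (hσ : ∀ i : Fin n, (σ i : ℕ) =
      if (i : ℕ) ≤ n - 3 then (i : ℕ) + 2
      else if n % 2 = 0 then (if (i : ℕ) = n - 2 then 0 else 1)
      else (if (i : ℕ) = n - 2 then 1 else 0)) :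
    Function.Bijective σ ∧
    (∀ x, σ x ≠ x) ∧
    (Finset.univ.filter fun x : Fin n => σ x < x).card = 2 ∧
    ∃ e : Equiv.Perm (Fin n), ⇑e = σ ∧ e.cycleType = {n / 2, (n + 1) / 2} := by
  have hσ_eq : ⇑(shiftTwo n) = σ := by
    funext x
    apply Fin.ext
    rw [shiftTwo_apply, hσ]
    split_ifs <;> omega
  have hval (x : Fin n) : (σ x : ℕ) = if (x : ℕ) + 2 < n then (x : ℕ) + 2 else (x : ℕ) % 2 := by
    rw [← hσ_eq, shiftTwo_apply]
  have hdescents : (Finset.univ.filter fun x : Fin n => σ x < x) =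
      {⟨n - 2, by omega⟩, ⟨n - 1, by omega⟩} := by
    ext x
    simp only [Finset.mem_filter, Finset.mem_univ, true_and, Finset.mem_insert,
      Finset.mem_singleton, Fin.lt_def, Fin.ext_iff, hval x]
    split_ifs <;> omega
  refine ⟨hσ_eq ▸ (shiftTwo n).bijective, fun x hx => ?_, ?_, shiftTwo n, hσ_eq,
    cycleType_shiftTwo hn⟩
  · have := hval x
    rw [hx] at this
    split_ifs at this <;> omega
  · rw [hdescents, Finset.card_pair (by simp [Fin.ext_iff]; omega)]
end

section
/- Let σ be a fixed-point-free permutation of {1,...,n} (n ≥ 4) such that: (a) exactly two elements x satisfy σ(x) < x; (b) σ preserves parity (σ(x) ≡ x mod 2 for all x). Then σ(i) = i + 2 for all i ≤ n - 2. -/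
/-!
The last two elements `n - 1` and `n - 2` are forced to be descents: a parity-preserving
`σ` without fixed points moves a non-descent `x` up by at least `2`, which is impossible there.
So these are the two descents, and every `x ≤ n - 3` satisfies `σ x ≥ x + 2`. Downward
induction then gives `σ x = x + 2`: if `σ x ≥ x + 4`, the value `σ x` is already taken by
`σ x - 2`, which lies in the range where the claim is known.
-/

open Finset

theorem Nat.add_two_le_of_mod_two_eq {a b : ℕ} (hne : a ≠ b) (hpar : a % 2 = b % 2)
    (hle : b ≤ a) : b + 2 ≤ a := by
  omega

section

variable {n : ℕ} {σ : Equiv.Perm (Fin n)}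

theorem Equiv.Perm.apply_lt_of_le_add_two {x : Fin n} (hfp : σ x ≠ x)
    (hpar : (σ x : ℕ) % 2 = (x : ℕ) % 2) (hx : n ≤ (x : ℕ) + 2) : σ x < x := by
  by_contra hle
  have := Nat.add_two_le_of_mod_two_eq (Fin.val_ne_of_ne hfp) hpar (not_lt.1 hle)
  omega

theorem Equiv.Perm.not_apply_lt_of_add_two_lt (hfp : ∀ x, σ x ≠ x)
    (hdesc : #{x | σ x < x} = 2) (hpar : ∀ x : Fin n, (σ x : ℕ) % 2 = (x : ℕ) % 2)
    {x : Fin n} (hx : (x : ℕ) + 2 < n) : ¬ σ x < x := by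
  intro hlt
  have mem_descents {y : Fin n} (hy : n ≤ (y : ℕ) + 2) : y ∈ ({x | σ x < x} : Finset _) :=
    mem_filter.2 ⟨mem_univ y, apply_lt_of_le_add_two (hfp y) (hpar y) hy⟩
  have : 2 < #{x | σ x < x} :=
    two_lt_card.2 ⟨x, mem_filter.2 ⟨mem_univ x, hlt⟩,
      ⟨n - 2, by omega⟩, mem_descents (by simp only; omega),
      ⟨n - 1, by omega⟩, mem_descents (by simp only; omega),
      Fin.ne_of_val_ne (by simp only; omega), Fin.ne_of_val_ne (by simp only; omega),
      Fin.ne_of_val_ne (by simp only; omega)⟩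
  omega

end

theorem Fin.val_apply_eq_add_two {n : ℕ} {f : Fin n → Fin n} (hf : Function.Injective f)
    (hpar : ∀ x : Fin n, (f x : ℕ) % 2 = (x : ℕ) % 2)
    (hge : ∀ x : Fin n, (x : ℕ) + 2 < n → (x : ℕ) + 2 ≤ f x) :
    ∀ x : Fin n, (x : ℕ) + 2 < n → (f x : ℕ) = x + 2 := by
  intro x
  induction hk : n - x using Nat.strong_induction_on generalizing x with
  | _ k ih =>
    intro hx
    by_contra hne
    have hx4 : (x : ℕ) + 4 ≤ f x := by
      have := hge x hx
      have := hpar x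
      omega
    let y : Fin n := ⟨f x - 2, by omega⟩
    have hy_val : (y : ℕ) = f x - 2 := rfl
    have hy : (f y : ℕ) = y + 2 := ih (n - y) (by omega) y rfl (by omega)
    have hyx : y = x := hf (Fin.ext (by omega))
    have := congrArg Fin.val hyx
    omega

/-- A fixed-point-free permutation of `{1,...,n}` (`n ≥ 4`, as `Fin n`) with exactly two
descent pairs which preserves parity satisfies `σ i = i + 2` for all `i ≤ n - 2`
(in 1-based indexing; here `i` ranges over `Fin n` with `(i : ℕ) ≤ n - 3`). -/
theorem stmt9 (n : ℕ) (hn : 4 ≤ n) (σ : Equiv.Perm (Fin n))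
    (hfp : ∀ x, σ x ≠ x)
    (hdesc : (Finset.univ.filter fun x : Fin n => σ x < x).card = 2)
    (hpar : ∀ x : Fin n, (σ x : ℕ) % 2 = (x : ℕ) % 2) :
    ∀ i : Fin n, (i : ℕ) ≤ n - 3 → (σ i : ℕ) = (i : ℕ) + 2 := by
  have hge (x : Fin n) (hx : (x : ℕ) + 2 < n) : (x : ℕ) + 2 ≤ σ x :=
    Nat.add_two_le_of_mod_two_eq (Fin.val_ne_of_ne (hfp x)) (hpar x)
      (not_lt.1 (σ.not_apply_lt_of_add_two_lt hfp hdesc hpar hx))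
  intro i hi
  exact Fin.val_apply_eq_add_two σ.injective hpar hge i (by omega)
end

section
/- Define T_i : {k ∈ ℕ^p : |k| = i} → ℝ recursively by T_1(δ_j) = w_j for each j ∈ [p], and T_{i+1}(u) = Σ_{j ∈ [p], u_j ≥ 1} T_i(u - δ_j) · w_j · Π_{l=1}^p r_{jl}^{(u - δ_j)_l}, where r is a symmetric p×p matrix of reals and w ∈ ℝ^p. Then for all i ≥ 1 and all k ∈ ℕ^p with |k| = i, T_i(k) = (i choose k) · Π_{a<b} r_{ab}^{k_a k_b} · Π_{a=1}^p r_{aa}^{C(k_a, 2)} · w_a^{k_a}. -/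
/-- The table of the IncrementalWFOMC dynamic programming algorithm:
`T 1 (δ_j) = w j` and
`T (i+1) u = ∑_{j, u j ≥ 1} T i (u - δ_j) * w j * ∏ l, (r j l) ^ ((u - δ_j) l)`. -/
noncomputable def T {p : ℕ} (r : Fin p → Fin p → ℝ) (w : Fin p → ℝ) :
    ℕ → (Fin p → ℕ) → ℝ
  | 0, _ => 0
  | 1, k => ∑ j : Fin p, if k = Pi.single j 1 then w j else 0
  | (i + 2), k => ∑ j : Fin p,
      if 1 ≤ k j then
        T r w (i + 1) (k - Pi.single j 1) * w j *
          ∏ l : Fin p, (r j l) ^ ((k - Pi.single j 1 : Fin p → ℕ) l)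
      else 0

/-!
Induction on `i`. Adding the unit vector `δ_j` to `k` multiplies the closed form
`∏_{a<b} r_ab^(k_a k_b) ∏_a r_aa^C(k_a,2) w_a^k_a` by exactly the factor `w_j ∏_l r_jl^k_l`
of the recursion: the exponents of the pairs `(a, j)` and `(j, b)` each grow by one copy of `k`,
and the symmetry of `r` merges them into the row `j`. What is left is the Pascal rule
`∑_j (multinomial of k - δ_j) = multinomial of k`, which follows from
`multinomial (k + δ_j) * (k_j + 1) = (|k| + 1) * multinomial k`.
-/

open Finset

section AddSingle

variable {α : Type*} [DecidableEq α]

theorem exists_eq_add_single_of_one_le {f : α → ℕ} {a : α} (h : 1 ≤ f a) :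
    ∃ g : α → ℕ, f = g + Pi.single a 1 :=
  ⟨f - Pi.single a 1, funext fun i => by
    rcases eq_or_ne i a with rfl | hi
    · simp only [Pi.add_apply, Pi.sub_apply, Pi.single_eq_same]; omega
    · simp [hi]⟩

theorem sum_add_single {s : Finset α} {a : α} (ha : a ∈ s) (f : α → ℕ) :
    ∑ i ∈ s, (f + Pi.single a 1 : α → ℕ) i = ∑ i ∈ s, f i + 1 := by
  simp [sum_add_distrib, ha]

theorem Nat.multinomial_add_single_mul {s : Finset α} {a : α} (ha : a ∈ s) (f : α → ℕ) :
    Nat.multinomial s (f + Pi.single a 1) * (f a + 1) =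
      (∑ i ∈ s, f i + 1) * Nat.multinomial s f := by
  have ha' := notMem_erase a s
  have hrest : Nat.multinomial (s.erase a) (f + Pi.single a 1) = Nat.multinomial (s.erase a) f :=
    Nat.multinomial_congr fun i hi => by simp [ne_of_mem_erase hi]
  have hsum : ∑ i ∈ s.erase a, (f + Pi.single a 1 : α → ℕ) i = ∑ i ∈ s.erase a, f i :=
    sum_congr rfl fun i hi => by simp [ne_of_mem_erase hi]
  rw [← insert_erase ha, Nat.multinomial_insert ha', Nat.multinomial_insert ha', hrest,
    sum_insert ha', hsum]
  simp only [Pi.add_apply, Pi.single_eq_same]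
  rw [add_right_comm, ← mul_assoc, Nat.add_one_mul_choose_eq]
  ring

theorem Nat.sum_multinomial_sub_single {s : Finset α} {f : α → ℕ}
    (hf : 0 < ∑ i ∈ s, f i) :
    ∑ a ∈ s, (if 1 ≤ f a then Nat.multinomial s (f - Pi.single a 1) else 0) =
      Nat.multinomial s f := by
  refine Nat.eq_of_mul_eq_mul_left hf ?_
  have hterm : ∀ a ∈ s,
      (∑ i ∈ s, f i) * (if 1 ≤ f a then Nat.multinomial s (f - Pi.single a 1) else 0) =
        Nat.multinomial s f * f a := by
    intro a ha
    split_ifs with h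
    · obtain ⟨g, rfl⟩ := exists_eq_add_single_of_one_le h
      rw [sum_add_single ha, add_tsub_cancel_right]
      simp only [Pi.add_apply, Pi.single_eq_same]
      exact (Nat.multinomial_add_single_mul ha g).symm
    · simp [show f a = 0 by omega]
  rw [mul_sum, sum_congr rfl hterm, ← mul_sum, mul_comm]

end AddSingle

section ConfigWeight

variable {ι M : Type*} [Fintype ι] [LinearOrder ι] [CommMonoid M]

theorem prod_prod_eq_prod_lt_mul_prod_diag (g : ι → ι → M) :
    ∏ a, ∏ b, g a b =
      (∏ x ∈ univ.filter (fun x : ι × ι => x.1 < x.2), g x.1 x.2 * g x.2 x.1) *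
        ∏ a, g a a := by
  have hsplit : ∀ x : ι × ι, g x.1 x.2 = (if x.1 < x.2 then g x.1 x.2 else 1) *
      (if x.2 < x.1 then g x.1 x.2 else 1) * (if x.1 = x.2 then g x.1 x.2 else 1) := by
    intro x
    rcases lt_trichotomy x.1 x.2 with h | h | h
    · simp [h, h.ne, h.not_gt]
    · simp [h]
    · simp [h, h.ne', h.not_gt]
  have hswap : ∏ x ∈ univ.filter (fun x : ι × ι => x.2 < x.1), g x.1 x.2 =
      ∏ x ∈ univ.filter (fun x : ι × ι => x.1 < x.2), g x.2 x.1 :=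
    prod_nbij' Prod.swap Prod.swap (by simp) (by simp) (by simp) (by simp) (by simp)
  have hdiag : ∏ x : ι × ι, (if x.1 = x.2 then g x.1 x.2 else 1) = ∏ a, g a a := by
    simp [Fintype.prod_prod_type]
  rw [← Fintype.prod_prod_type' g, Fintype.prod_congr _ _ hsplit, prod_mul_distrib,
    prod_mul_distrib, ← prod_filter, ← prod_filter, hswap, hdiag, prod_mul_distrib]

def configWeight (r : ι → ι → M) (w : ι → M) (k : ι → ℕ) : M :=
  (∏ x ∈ univ.filter (fun x : ι × ι => x.1 < x.2), r x.1 x.2 ^ (k x.1 * k x.2)) *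
    ∏ a, r a a ^ (k a).choose 2 * w a ^ k a

@[simp]
theorem configWeight_zero (r : ι → ι → M) (w : ι → M) : configWeight r w 0 = 1 := by
  simp [configWeight]

theorem configWeight_add_single {r : ι → ι → M} (hr : ∀ a b, r a b = r b a) (w : ι → M)
    (k : ι → ℕ) (j : ι) :
    configWeight r w (k + Pi.single j 1) = configWeight r w k * w j * ∏ l, r j l ^ k l := by
  set δ : ι → ℕ := Pi.single j 1 with hδ
  have hpair : ∀ a b, a ≠ b →
      (k + δ) a * (k + δ) b = k a * k b + (δ a * k b + δ b * k a) := by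
    intro a b hab
    rcases eq_or_ne a j with rfl | ha
    · simp [hδ, Ne.symm hab, add_mul]
    rcases eq_or_ne b j with rfl | hb
    · simp [hδ, hab, mul_add, mul_comm]
    · simp [hδ, ha, hb]
  have hdiag : ∀ a, ((k + δ) a).choose 2 = (k a).choose 2 + δ a * k a := by
    intro a
    rcases eq_or_ne a j with rfl | ha
    · simp [hδ, Nat.choose_succ_succ', add_comm]
    · simp [hδ, ha]
  have hrow : ∏ l, r j l ^ k l =
      (∏ x ∈ univ.filter (fun x : ι × ι => x.1 < x.2),
          r x.1 x.2 ^ (δ x.1 * k x.2 + δ x.2 * k x.1)) * ∏ a, r a a ^ (δ a * k a) := by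
    have : ∏ l, r j l ^ k l = ∏ a, ∏ b, r a b ^ (δ a * k b) := by
      symm
      rw [Fintype.prod_eq_single j fun a ha => by simp [hδ, ha]]
      simp [hδ]
    rw [this, prod_prod_eq_prod_lt_mul_prod_diag]
    congr 1
    exact prod_congr rfl fun x _ => by rw [hr x.2 x.1, ← pow_add]
  have hw : ∏ a, w a ^ δ a = w j := by
    rw [Fintype.prod_eq_single j fun a ha => by simp [hδ, ha]]
    simp [hδ]
  have hpairs : ∏ x ∈ univ.filter (fun x : ι × ι => x.1 < x.2),
        r x.1 x.2 ^ ((k + δ) x.1 * (k + δ) x.2) =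
      (∏ x ∈ univ.filter (fun x : ι × ι => x.1 < x.2), r x.1 x.2 ^ (k x.1 * k x.2)) *
        ∏ x ∈ univ.filter (fun x : ι × ι => x.1 < x.2),
          r x.1 x.2 ^ (δ x.1 * k x.2 + δ x.2 * k x.1) := by
    rw [← prod_mul_distrib]
    exact prod_congr rfl fun x hx => by rw [hpair x.1 x.2 (mem_filter.mp hx).2.ne, pow_add]
  have hdiags : ∏ a, r a a ^ ((k + δ) a).choose 2 * w a ^ (k + δ) a =
      (∏ a, r a a ^ (k a).choose 2 * w a ^ k a) * (∏ a, r a a ^ (δ a * k a)) * w j := by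
    rw [← hw, ← prod_mul_distrib, ← prod_mul_distrib]
    exact prod_congr rfl fun a _ => by rw [hdiag a, Pi.add_apply, pow_add, pow_add]; ac_rfl
  rw [configWeight, configWeight, hpairs, hdiags, hrow]
  ac_rfl

end ConfigWeight

section IncrementalWFOMC

variable {p : ℕ} {r : Fin p → Fin p → ℝ} {w : Fin p → ℝ}

theorem T_one_single (j : Fin p) : T r w 1 (Pi.single j 1) = w j := by
  rw [T, sum_eq_single_of_mem j (mem_univ j) fun b _ hb => if_neg fun h => ?_, if_pos rfl]
  simpa [hb] using congrFun h j

theorem T_eq_multinomial_mul_configWeight (hr : ∀ a b, r a b = r b a) {i : ℕ} (hi : 1 ≤ i)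
    {k : Fin p → ℕ} (hk : ∑ a, k a = i) :
    T r w i k = Nat.multinomial univ k * configWeight r w k := by
  induction i, hi using Nat.le_induction generalizing k with
  | base =>
    obtain ⟨j, -, hj⟩ := sum_pos_iff.mp (by omega : 0 < ∑ a, k a)
    obtain ⟨k', rfl⟩ := exists_eq_add_single_of_one_le hj
    obtain rfl : k' = 0 := by
      rw [sum_add_single (mem_univ j), Nat.add_eq_right, sum_eq_zero_iff] at hk
      exact funext fun a => hk a (mem_univ a)
    rw [configWeight_add_single hr, zero_add, T_one_single, Nat.multinomial_single]
    simp
  | succ i hi ih =>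
    obtain ⟨n, rfl⟩ := Nat.exists_eq_add_of_le' hi
    have hterm : ∀ j, (if 1 ≤ k j then T r w (n + 1) (k - Pi.single j 1) * w j *
          ∏ l, r j l ^ (k - Pi.single j 1 : Fin p → ℕ) l else 0) =
        (if 1 ≤ k j then (Nat.multinomial univ (k - Pi.single j 1) : ℝ) else 0) *
          configWeight r w k := by
      intro j
      split_ifs with hj
      · obtain ⟨k', rfl⟩ := exists_eq_add_single_of_one_le hj
        rw [sum_add_single (mem_univ j)] at hk
        rw [add_tsub_cancel_right, ih (by omega), configWeight_add_single hr]
        ring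
      · rw [zero_mul]
    have hpascal := congrArg (Nat.cast : ℕ → ℝ) (Nat.sum_multinomial_sub_single (s := univ)
      (by omega : 0 < ∑ a, k a))
    push_cast at hpascal
    rw [T, sum_congr rfl fun j _ => hterm j, ← sum_mul, hpascal]

end IncrementalWFOMC

/-- Correctness invariant of IncrementalWFOMC: for a symmetric matrix `r`, for all `i ≥ 1`
and all p-vectors `k` with `|k| = i`,
`T i k = (i choose k) * ∏_{a<b} r a b ^ (k a * k b) * ∏ a, r a a ^ C(k a, 2) * w a ^ k a`. -/
theorem stmt10 {p : ℕ} (r : Fin p → Fin p → ℝ) (w : Fin p → ℝ)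
    (hsym : ∀ a b, r a b = r b a) :
    ∀ i : ℕ, 1 ≤ i → ∀ k : Fin p → ℕ, (∑ a, k a) = i →
      T r w i k = (Nat.multinomial Finset.univ k : ℝ) *
        (∏ x ∈ Finset.univ.filter (fun x : Fin p × Fin p => x.1 < x.2),
          r x.1 x.2 ^ (k x.1 * k x.2)) *
        ∏ a : Fin p, r a a ^ Nat.choose (k a) 2 * w a ^ (k a) := by
  intro i hi k hk
  rw [T_eq_multinomial_mul_configWeight hsym hi hk, configWeight, mul_assoc]
end

section
/- Let r be a symmetric p×p real matrix, w ∈ ℝ^p, and n ≥ 1. Then Σ_{k ∈ ℕ^p, |k| = n} (n choose k) · Π_{a<b} r_{ab}^{k_a k_b} · Π_a r_{aa}^{C(k_a,2)} w_a^{k_a} equals the sum over all functions f : {1,...,n} → {1,...,p} of Π_{1 ≤ s < t ≤ n} r_{f(s) f(t)} · Π_{s=1}^n w_{f(s)}. -/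
/-!
The summand of an assignment `f` depends only on its occupancy vector `k`. Among the pairs
`s < t`, those sent to two distinct cells `a ≠ b` (in either order) number `k a * k b`, and those
sent into the same cell `a` number `(k a).choose 2`; by symmetry of `r` the pair product is
therefore the product over `a < b` and over the diagonal. The number of assignments with
occupancy vector `k` is the multinomial coefficient: compare the coefficient of `X ^ k` in the two
expansions of `(∑ a, X a) ^ n`, as a sum over assignments and by the multinomial theorem.
-/

open Finset

variable {ι α M : Type*}

section Occupancy

variable [Fintype ι] [DecidableEq α]

def occupancy (f : ι → α) (a : α) : ℕ := #{i | f i = a}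

lemma occupancy_mem_piAntidiag [Fintype α] (f : ι → α) :
    occupancy f ∈ piAntidiag univ (Fintype.card ι) :=
  mem_piAntidiag.2
    ⟨(card_eq_sum_card_fiberwise (f := f) (s := univ) (t := univ) fun _ _ => mem_univ _).symm,
      fun _ _ => mem_univ _⟩

lemma prod_comp_eq_prod_pow_occupancy [Fintype α] [CommMonoid M] (f : ι → α) (g : α → M) :
    ∏ i, g (f i) = ∏ a, g a ^ occupancy f a := by
  simp only [occupancy, ← prod_const]
  exact (prod_fiberwise' univ f g).symm

end Occupancy

namespace MvPolynomial

lemma coeff_equivFunOnFinite_prod_X_pow {σ R : Type*} [Fintype σ] [DecidableEq σ]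
    [CommSemiring R] (k x : σ → ℕ) :
    coeff (Finsupp.equivFunOnFinite.symm k) (∏ a, (X a : MvPolynomial σ R) ^ x a) =
      if x = k then 1 else 0 := by
  have : Finsupp.indicator univ (fun a _ => x a) = Finsupp.equivFunOnFinite.symm x := by
    ext; simp
  simp only [coeff_prod_X_pow, this, Finsupp.equivFunOnFinite.symm.injective.eq_iff, eq_comm]

end MvPolynomial

open MvPolynomial in
theorem card_filter_occupancy_eq_multinomial [Fintype ι] [DecidableEq ι] [Fintype α]
    [DecidableEq α] {k : α → ℕ} (hk : k ∈ piAntidiag univ (Fintype.card ι)) :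
    #{f : ι → α | occupancy f = k} = Nat.multinomial univ k := by
  have expand : ∑ f : ι → α, ∏ a, (X a : MvPolynomial α ℕ) ^ occupancy f a =
      ∑ k ∈ piAntidiag univ (Fintype.card ι), Nat.multinomial univ k • ∏ a, X a ^ k a := by
    calc ∑ f : ι → α, ∏ a, (X a : MvPolynomial α ℕ) ^ occupancy f a
        = ∑ f : ι → α, ∏ i, X (f i) := by simp_rw [prod_comp_eq_prod_pow_occupancy]
      _ = (∑ a, X a) ^ Fintype.card ι := by
        rw [← Fintype.prod_sum, prod_const, card_univ]
      _ = _ := by simp only [sum_pow_eq_sum_piAntidiag, nsmul_eq_mul]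
  have := congrArg (coeff (Finsupp.equivFunOnFinite.symm k)) expand
  simp only [coeff_sum, coeff_smul, smul_eq_mul, coeff_equivFunOnFinite_prod_X_pow, mul_ite,
    mul_one, mul_zero, sum_boole, sum_ite_eq', if_pos hk, Nat.cast_id] at this
  exact this

theorem sum_comp_occupancy [Fintype ι] [DecidableEq ι] [Fintype α] [DecidableEq α]
    [AddCommMonoid M] (G : (α → ℕ) → M) :
    ∑ f : ι → α, G (occupancy f) =
      ∑ k ∈ piAntidiag univ (Fintype.card ι), Nat.multinomial univ k • G k := by
  rw [← sum_fiberwise_of_maps_to fun f _ => occupancy_mem_piAntidiag f]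
  refine sum_congr rfl fun k hk => ?_
  rw [sum_congr rfl fun f hf => by rw [(mem_filter.1 hf).2], sum_const,
    card_filter_occupancy_eq_multinomial hk]

lemma card_product_filter_lt_add_card_product_filter_lt [LinearOrder ι] {s t : Finset ι}
    (h : Disjoint s t) :
    #{x ∈ s ×ˢ t | x.1 < x.2} + #{x ∈ t ×ˢ s | x.1 < x.2} = #s * #t := by
  have swap : #{x ∈ t ×ˢ s | x.1 < x.2} = #{x ∈ s ×ˢ t | x.2 < x.1} :=
    card_equiv (Equiv.prodComm ι ι) (by grind)
  have gt_iff_not_lt : {x ∈ s ×ˢ t | x.2 < x.1} = {x ∈ s ×ˢ t | ¬ x.1 < x.2} := by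
    refine filter_congr fun x hx => ?_
    obtain ⟨hs, ht⟩ := mem_product.1 hx
    have hne : x.2 ≠ x.1 := fun e => disjoint_left.1 h hs (e ▸ ht)
    rw [not_lt, hne.le_iff_lt]
  rw [swap, gt_iff_not_lt, card_filter_add_card_filter_not, card_product]

lemma prod_prod_type_eq_prod_lt_mul_prod_diag [Fintype α] [LinearOrder α] [CommMonoid M]
    (F : α × α → M) :
    ∏ y, F y = (∏ y ∈ {y : α × α | y.1 < y.2}, F y * F y.swap) * ∏ a, F (a, a) := by
  have gt : ∏ y ∈ {y : α × α | y.1 < y.2}, F y.swap = ∏ y ∈ {y : α × α | y.2 < y.1}, F y :=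
    prod_equiv (Equiv.prodComm α α) (by simp) (by simp)
  have diag : ∏ a, F (a, a) = ∏ y ∈ {y : α × α | ¬ y.1 < y.2 ∧ ¬ y.2 < y.1}, F y := by
    rw [← prod_diag]
    congr 1
    ext y
    simp [le_antisymm_iff, and_comm]
  rw [prod_mul_distrib, gt, diag, mul_assoc,
    ← prod_filter_mul_prod_filter_not univ (fun y : α × α => y.1 < y.2),
    ← prod_filter_mul_prod_filter_not (univ.filter fun y : α × α => ¬ y.1 < y.2)
      (fun y => y.2 < y.1), filter_filter, filter_filter]
  have gt_of_not_lt : (univ.filter fun y : α × α => ¬ y.1 < y.2 ∧ y.2 < y.1) =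
      univ.filter fun y => y.2 < y.1 :=
    filter_congr fun _ _ => and_iff_right_of_imp lt_asymm
  rw [gt_of_not_lt]

theorem prod_pairs_lt_eq_prod_pow_occupancy [Fintype ι] [LinearOrder ι] [Fintype α]
    [LinearOrder α] [CommMonoid M] (r : α → α → M) (hr : ∀ a b, r a b = r b a) (f : ι → α) :
    ∏ x ∈ {x : ι × ι | x.1 < x.2}, r (f x.1) (f x.2) =
      (∏ y ∈ {y : α × α | y.1 < y.2}, r y.1 y.2 ^ (occupancy f y.1 * occupancy f y.2)) *
        ∏ a, r a a ^ (occupancy f a).choose 2 := by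
  set fiber : α → Finset ι := fun a => {i | f i = a}
  have count (y : α × α) : #{x ∈ {x : ι × ι | x.1 < x.2} | (f x.1, f x.2) = y} =
      #{x ∈ fiber y.1 ×ˢ fiber y.2 | x.1 < x.2} := by
    congr 1; ext x; simp [fiber, Prod.ext_iff]; tauto
  calc ∏ x ∈ {x : ι × ι | x.1 < x.2}, r (f x.1) (f x.2)
      = ∏ y : α × α, r y.1 y.2 ^ #{x ∈ fiber y.1 ×ˢ fiber y.2 | x.1 < x.2} := by
        refine (prod_fiberwise' _ (fun x : ι × ι => (f x.1, f x.2))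
          fun y => r y.1 y.2).symm.trans ?_
        simp_rw [prod_const, count]
    _ = _ := prod_prod_type_eq_prod_lt_mul_prod_diag _
    _ = _ := by
        congr 1
        · refine prod_congr rfl fun y hy => ?_
          have hdisj : Disjoint (fiber y.1) (fiber y.2) :=
            disjoint_filter.2 fun i _ h1 h2 => (mem_filter.1 hy).2.ne (h1 ▸ h2)
          rw [Prod.snd_swap, Prod.fst_swap, hr y.2 y.1, ← pow_add,
            card_product_filter_lt_add_card_product_filter_lt hdisj]
          rfl
        · simp_rw [card_product_filter_lt]
          rfl

theorem stmt11_general {p : ℕ} (r : Fin p → Fin p → ℝ) (w : Fin p → ℝ)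
    (hsym : ∀ a b, r a b = r b a) (n : ℕ) :
    ∑ k ∈ Finset.Nat.antidiagonalTuple p n,
      ((Nat.multinomial Finset.univ k : ℝ) *
        (∏ x ∈ Finset.univ.filter (fun x : Fin p × Fin p => x.1 < x.2),
          r x.1 x.2 ^ (k x.1 * k x.2)) *
        ∏ a : Fin p, r a a ^ Nat.choose (k a) 2 * w a ^ (k a)) =
    ∑ f : Fin n → Fin p,
      (∏ x ∈ Finset.univ.filter (fun x : Fin n × Fin n => x.1 < x.2),
        r (f x.1) (f x.2)) * ∏ s : Fin n, w (f s) := by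
  let weight (k : Fin p → ℕ) : ℝ :=
    (∏ y ∈ {y : Fin p × Fin p | y.1 < y.2}, r y.1 y.2 ^ (k y.1 * k y.2)) *
      (∏ a, r a a ^ (k a).choose 2) * ∏ a, w a ^ k a
  have summand (f : Fin n → Fin p) :
      (∏ x ∈ {x : Fin n × Fin n | x.1 < x.2}, r (f x.1) (f x.2)) * ∏ s, w (f s) =
        weight (occupancy f) := by
    rw [prod_pairs_lt_eq_prod_pow_occupancy r hsym, prod_comp_eq_prod_pow_occupancy]
  rw [Fintype.sum_congr _ _ summand, sum_comp_occupancy, Fintype.card_fin,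
    piAntidiag_univ_fin_eq_antidiagonalTuple]
  refine sum_congr rfl fun k _ => ?_
  rw [nsmul_eq_mul, prod_mul_distrib]
  simp only [weight, mul_assoc]

/-- Grouping assignments of `n` domain elements to `p` cells by their occupancy vector:
the closed-form sum over p-vectors equals the sum over all cell assignments. -/
theorem stmt11 {p : ℕ} (r : Fin p → Fin p → ℝ) (w : Fin p → ℝ)
    (hsym : ∀ a b, r a b = r b a) (n : ℕ) (hn : 1 ≤ n) :
    ∑ k ∈ Finset.Nat.antidiagonalTuple p n,
      ((Nat.multinomial Finset.univ k : ℝ) *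
        (∏ x ∈ Finset.univ.filter (fun x : Fin p × Fin p => x.1 < x.2),
          r x.1 x.2 ^ (k x.1 * k x.2)) *
        ∏ a : Fin p, r a a ^ Nat.choose (k a) 2 * w a ^ (k a)) =
    ∑ f : Fin n → Fin p,
      (∏ x ∈ Finset.univ.filter (fun x : Fin n × Fin n => x.1 < x.2),
        r (f x.1) (f x.2)) * ∏ s : Fin n, w (f s) :=
  stmt11_general r w hsym n
end

section
/- Let r be an arbitrary (not necessarily symmetric) p×p real matrix and w ∈ ℝ^p. Define T_i as in the incremental algorithm: T_1(δ_j) = w_j and T_{i+1}(u) = Σ_j T_i(u - δ_j) · w_j · Π_l r_{jl}^{(u-δ_j)_l}. Then Σ_{k: |k|=n} T_n(k) equals the sum over all functions f : {1,...,n} → {1,...,p} of Π_{1 ≤ s < t ≤ n} r_{f(t) f(s)} · Π_s w_{f(s)}. -/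
/-!
Both sides are sums over cell assignments `f : Fin n → Fin p`. Appending a last element of
cell `j` to an assignment `f` multiplies its weight by `w j * ∏ s, r j (f s)`, because the new
element comes after every earlier one; grouping `∏ s, r j (f s)` by cells gives
`∏ l, r j l ^ k l`, where `k` counts the elements of `f` in each cell. So the recursion for `T`
is exactly the recursion for the total weight of the assignments with cell counts `k`, and
summing over all `k` with `|k| = n` counts every assignment once.
-/

namespace IncrementalWFOMC

open Finset

section CellCount

variable {ι α : Type*} [Fintype ι] [DecidableEq α]

def cellCount (f : ι → α) (a : α) : ℕ := #{i | f i = a}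

lemma cellCount_of_isEmpty [IsEmpty ι] (f : ι → α) : cellCount f = 0 := by
  ext
  simp [cellCount]

lemma sum_cellCount [Fintype α] (f : ι → α) : ∑ a, cellCount f a = Fintype.card ι := by
  simp only [cellCount, ← card_univ]
  exact (card_eq_sum_card_fiberwise fun i _ => mem_univ (f i)).symm

lemma prod_comp_eq_prod_pow_cellCount [Fintype α] {M : Type*} [CommMonoid M] (g : α → M)
    (f : ι → α) : ∏ i, g (f i) = ∏ a, g a ^ cellCount f a := by
  rw [← prod_fiberwise' univ f g]
  simp [cellCount]

lemma cellCount_snoc {n : ℕ} (f : Fin n → α) (a : α) :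
    cellCount (Fin.snoc f a : Fin (n + 1) → α) = cellCount f + Pi.single a 1 := by
  funext b
  simp only [cellCount, card_filter, Fin.sum_univ_castSucc, Fin.snoc_castSucc, Fin.snoc_last,
    Pi.add_apply, Pi.single_apply, eq_comm]

lemma add_single_one_eq_iff (c k : α → ℕ) (a : α) :
    c + Pi.single a 1 = k ↔ 1 ≤ k a ∧ c = k - Pi.single a 1 := by
  constructor
  · rintro rfl
    simp
  · rintro ⟨hk, rfl⟩
    funext b
    by_cases hb : b = a
    · subst hb
      simpa using Nat.sub_add_cancel hk
    · simp [hb]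

lemma sum_ite_cellCount_eq_sum_snoc [Fintype α] {M : Type*} [AddCommMonoid M] {n : ℕ}
    (W : (Fin (n + 1) → α) → M) (k : α → ℕ) :
    ∑ g : Fin (n + 1) → α, (if cellCount g = k then W g else 0) =
      ∑ a, ∑ f : Fin n → α,
        if cellCount f + Pi.single a 1 = k then W (Fin.snoc f a) else 0 := by
  rw [← (Fin.snocEquiv fun _ => α).sum_comp, Fintype.sum_prod_type]
  refine sum_congr rfl fun a _ => sum_congr rfl fun f _ => ?_
  rw [← cellCount_snoc]
  rfl

end CellCount

section OrderedWeight

variable {α M : Type*} [CommMonoid M]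

def orderedWeight (r : α → α → M) (w : α → M) {n : ℕ} (f : Fin n → α) : M :=
  (∏ x ∈ univ.filter (fun x : Fin n × Fin n => x.1 < x.2), r (f x.2) (f x.1)) * ∏ s, w (f s)

lemma prod_filter_lt_eq_prod_prod_Iio {ι : Type*} [Fintype ι] [LinearOrder ι]
    [LocallyFiniteOrderBot ι] (F : ι × ι → M) :
    ∏ x ∈ univ.filter (fun x : ι × ι => x.1 < x.2), F x = ∏ t, ∏ s ∈ Iio t, F (s, t) := by
  rw [prod_filter, ← univ_product_univ, prod_product_right]
  refine prod_congr rfl fun t _ => ?_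
  rw [← prod_filter]
  congr 1
  ext s
  simp

lemma prod_filter_lt_snoc (r : α → α → M) {n : ℕ} (f : Fin n → α) (a : α) :
    ∏ x ∈ univ.filter (fun x : Fin (n + 1) × Fin (n + 1) => x.1 < x.2),
        r ((Fin.snoc f a : Fin (n + 1) → α) x.2) ((Fin.snoc f a : Fin (n + 1) → α) x.1) =
      (∏ x ∈ univ.filter (fun x : Fin n × Fin n => x.1 < x.2), r (f x.2) (f x.1)) *
        ∏ s, r a (f s) := by
  rw [prod_filter_lt_eq_prod_prod_Iio, prod_filter_lt_eq_prod_prod_Iio, Fin.prod_univ_castSucc,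
    Fin.Iio_last_eq_map]
  simp only [Fin.Iio_castSucc, prod_map, Fin.coe_castSuccEmb, Fin.snoc_castSucc, Fin.snoc_last]

lemma orderedWeight_snoc (r : α → α → M) (w : α → M) {n : ℕ} (f : Fin n → α) (a : α) :
    orderedWeight r w (Fin.snoc f a : Fin (n + 1) → α) =
      orderedWeight r w f * w a * ∏ s, r a (f s) := by
  rw [orderedWeight, orderedWeight, prod_filter_lt_snoc, Fin.prod_univ_castSucc]
  simp only [Fin.snoc_castSucc, Fin.snoc_last]
  ac_rfl

end OrderedWeight

section IncrementalTable

variable {p : ℕ} (r : Fin p → Fin p → ℝ) (w : Fin p → ℝ)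

theorem T_succ_eq_sum_orderedWeight (n : ℕ) (k : Fin p → ℕ) :
    T r w (n + 1) k =
      ∑ f : Fin (n + 1) → Fin p, if cellCount f = k then orderedWeight r w f else 0 := by
  induction n generalizing k with
  | zero =>
    rw [sum_ite_cellCount_eq_sum_snoc]
    simp only [orderedWeight_snoc, cellCount_of_isEmpty, zero_add]
    simp [T, orderedWeight, eq_comm]
  | succ n ih =>
    rw [T, sum_ite_cellCount_eq_sum_snoc]
    refine sum_congr rfl fun j _ => ?_
    simp_rw [orderedWeight_snoc, add_single_one_eq_iff]
    split_ifs with hk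
    · rw [ih, sum_mul, sum_mul]
      refine sum_congr rfl fun f _ => ?_
      simp only [hk, true_and]
      split_ifs with hf
      · rw [prod_comp_eq_prod_pow_cellCount (r j) f, hf]
      · simp
    · simp [hk]

end IncrementalTable

end IncrementalWFOMC

/-- Correctness of IncrementalWFOMC with a fixed linear order on the domain: for an arbitrary
(not necessarily symmetric) matrix `r`, the total table weight equals the sum over all cell
assignments `f`, where the ordered pair `s < t` contributes `r (f t) (f s)`. -/
theorem stmt12 {p : ℕ} (r : Fin p → Fin p → ℝ) (w : Fin p → ℝ) (n : ℕ) (hn : 1 ≤ n) :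
    ∑ k ∈ Finset.Nat.antidiagonalTuple p n, T r w n k =
    ∑ f : Fin n → Fin p,
      (∏ x ∈ Finset.univ.filter (fun x : Fin n × Fin n => x.1 < x.2),
        r (f x.2) (f x.1)) * ∏ s : Fin n, w (f s) := by
  obtain ⟨m, rfl⟩ := Nat.exists_eq_add_of_le' hn
  simp_rw [IncrementalWFOMC.T_succ_eq_sum_orderedWeight]
  rw [Finset.sum_comm]
  refine Finset.sum_congr rfl fun f _ => ?_
  have hf : IncrementalWFOMC.cellCount f ∈ Finset.Nat.antidiagonalTuple p (m + 1) := by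
    simpa [Finset.Nat.mem_antidiagonalTuple] using IncrementalWFOMC.sum_cellCount f
  rw [Finset.sum_ite_eq, if_pos hf]
  rfl
end

section
/- Let n ≥ 2. The number of pairs of relations (Perm, Pred) on an n-element set D, such that Perm is a fixed-point-free permutation of D, Pred ⊆ Perm, |Pred| = n - 1, and there exists a linear order ≤ on D with Pred(x, y) → x ≤ y, with the linear order counted as part of the structure (i.e., counting triples (≤, Perm, Pred)), is exactly n!. -/
/-!
A linear order on a finite set `D` of size `m + 1` is the same thing as a ranking
`e : D ≃ Fin (m + 1)`, and there are `(m + 1)!` of those; so it suffices that each ranking carries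
exactly one pair `(Perm, Pred)`. Since `Pred` is contained in the graph of the fixed-point-free
`Perm` and is compatible with the order, it is a strictly increasing partial function; having `m`
pairs, it is defined everywhere except at the maximum. Thus `Perm` moves every non-maximal element
strictly up, so its ranks dominate pointwise those of the rotation `x ↦ x + 1`, `max ↦ min`; both
being permutations, the rank sums agree, which forces `Perm` to be that rotation and `Pred` its
restriction to the non-maximal elements.
-/

open Equiv Function
open scoped Nat

theorem Equiv.Perm.eq_of_forall_le_of_injective {α : Type*} [Fintype α] {σ τ : Perm α}
    (f : α → ℕ) (hf : Injective f) (h : ∀ x, f (σ x) ≤ f (τ x)) : σ = τ := by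
  have hsum : ∑ x, f (σ x) = ∑ x, f (τ x) := by rw [Equiv.sum_comp σ f, Equiv.sum_comp τ f]
  ext x
  exact hf ((Finset.sum_eq_sum_iff_of_le fun x _ => h x).1 hsum x (Finset.mem_univ x))

theorem Equiv.eq_of_forall_le_iff_le {α β : Type*} [LinearOrder β] [WellFoundedLT β]
    {e₁ e₂ : α ≃ β} (h : ∀ x y, e₁ x ≤ e₁ y ↔ e₂ x ≤ e₂ y) : e₁ = e₂ := by
  let g : β ≃o β :=
    ⟨e₁.symm.trans e₂, fun {i j} => by simpa using (h (e₁.symm i) (e₁.symm j)).symm⟩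
  have hg : ∀ i, e₂ (e₁.symm i) = i := DFunLike.congr_fun (Subsingleton.elim g (.refl β))
  ext x
  simpa using (hg (e₁ x)).symm

theorem exists_equiv_fin_of_isLinearOrder {α : Type*} [Fintype α] {k : ℕ}
    (hα : Fintype.card α = k) (r : α → α → Prop) [IsLinearOrder α r] :
    ∃ e : α ≃ Fin k, ∀ x y, r x y ↔ e x ≤ e y := by
  classical
  let _ : LinearOrder α :=
    { le := r
      le_refl := refl_of r
      le_trans := fun _ _ _ => trans_of r
      le_antisymm := fun _ _ => antisymm_of r
      le_total := total_of r
      toDecidableLE := inferInstance }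
  exact ⟨(monoEquivOfFin α hα).symm.toEquiv, fun _ _ =>
    ((monoEquivOfFin α hα).symm.le_iff_le).symm⟩

theorem card_subtype_rel_eq_of_le_graph {α : Type*} {σ : α → α} {P : α → α → Prop}
    (hP : ∀ x y, P x y → y = σ x) :
    Nat.card {q : α × α // P q.1 q.2} = Nat.card {x // P x (σ x)} :=
  Nat.card_congr
    { toFun q := ⟨q.1.1, hP _ _ q.2 ▸ q.2⟩
      invFun x := ⟨(x.1, σ x.1), x.2⟩
      left_inv q := Subtype.ext (Prod.ext rfl (hP _ _ q.2).symm)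
      right_inv _ := rfl }

section PredModel

variable {α : Type*} {m : ℕ}

def IsPredModel (m : ℕ) (t : (α → α → Prop) × Perm α × (α → α → Prop)) : Prop :=
  IsLinearOrder α t.1 ∧ (∀ x, t.2.1 x ≠ x) ∧ (∀ x y, t.2.2 x y → y = t.2.1 x) ∧
    Nat.card {q : α × α // t.2.2 q.1 q.2} = m ∧ ∀ x y, t.2.2 x y → t.1 x y

def predModel (e : α ≃ Fin (m + 1)) : (α → α → Prop) × Perm α × (α → α → Prop) :=
  (fun x y => e x ≤ e y, e.symm.permCongr (finRotate (m + 1)), fun x y => (e y : ℕ) = e x + 1)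

@[simp]
theorem apply_predModel_perm (e : α ≃ Fin (m + 1)) (x : α) :
    e ((predModel e).2.1 x) = finRotate (m + 1) (e x) := by
  simp [predModel]

theorem card_apply_ne_last (e : α ≃ Fin (m + 1)) : Nat.card {x // e x ≠ Fin.last m} = m := by
  rw [Nat.card_congr (e.subtypeEquiv (q := (· ≠ Fin.last m)) fun _ => Iff.rfl)]
  simp

theorem predModel_perm_eq_of_lt [Fintype α] (e : α ≃ Fin (m + 1)) {σ : Perm α}
    (h : ∀ x, e x ≠ Fin.last m → e x < e (σ x)) : (predModel e).2.1 = σ := by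
  refine Perm.eq_of_forall_le_of_injective (fun x => (e x : ℕ))
    (Fin.val_injective.comp e.injective) fun x => ?_
  simp only [apply_predModel_perm, coe_finRotate]
  split_ifs with hx
  · exact Nat.zero_le _
  · exact h x hx

theorem predModel_pred_iff (e : α ≃ Fin (m + 1)) (x y : α) :
    (predModel e).2.2 x y ↔ e x ≠ Fin.last m ∧ y = (predModel e).2.1 x := by
  rw [← e.apply_eq_iff_eq, apply_predModel_perm, Fin.ext_iff, coe_finRotate]
  by_cases hx : e x = Fin.last m
  · simp only [predModel, hx, Fin.val_last, if_true]
    have := (e y).isLt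
    omega
  · simp [predModel, hx]

theorem isPredModel_predModel (hm : 1 ≤ m) (e : α ≃ Fin (m + 1)) :
    IsPredModel m (predModel e) := by
  have hgraph : ∀ x y, (predModel e).2.2 x y → y = (predModel e).2.1 x := fun x y hxy =>
    ((predModel_pred_iff e x y).1 hxy).2
  refine ⟨e.injective.isLinearOrder_onFun (r := (· ≤ ·)), fun x hx => ?_, hgraph, ?_,
    fun x y hxy => ?_⟩
  · have hfix : finRotate (m + 1) (e x) = e x := by simpa using congrArg e hx
    refine Perm.mem_support.1 ?_ hfix
    simp [support_finRotate_of_le (show 2 ≤ m + 1 by omega)]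
  · refine (card_subtype_rel_eq_of_le_graph hgraph).trans ?_
    exact (Nat.card_congr (subtypeEquivRight fun x => by simp [predModel_pred_iff])).trans
      (card_apply_ne_last e)
  · exact Fin.le_def.2 (by simp only [predModel] at hxy; omega)

theorem predModel_injective : Injective (predModel : (α ≃ Fin (m + 1)) → _) := fun _ _ h =>
  Equiv.eq_of_forall_le_iff_le fun x y => iff_of_eq (congrArg (fun t => t.1 x y) h)

theorem exists_predModel_eq [Fintype α] (hα : Fintype.card α = m + 1)
    {t : (α → α → Prop) × Perm α × (α → α → Prop)} (ht : IsPredModel m t) :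
    ∃ e : α ≃ Fin (m + 1), predModel e = t := by
  obtain ⟨r, σ, P⟩ := t
  obtain ⟨hr, hσ, hP, hcard, hPr⟩ := ht
  obtain ⟨e, he⟩ := exists_equiv_fin_of_isLinearOrder hα r
  have hlt : ∀ x y, P x y → e x < e y := fun x y hxy =>
    ((he x y).1 (hPr x y hxy)).lt_of_ne
      (e.injective.ne fun h => hσ x ((hP x y hxy).symm.trans h.symm))
  have hdom : {x | P x (σ x)} = {x | e x ≠ Fin.last m} := by
    refine Set.eq_of_subset_of_ncard_le (fun x hx => Fin.ne_last_of_lt (hlt x _ hx)) ?_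
      (Set.toFinite _)
    exact ((card_apply_ne_last e).trans
      (hcard.symm.trans (card_subtype_rel_eq_of_le_graph hP))).le
  have hσe : (predModel e).2.1 = σ := predModel_perm_eq_of_lt e fun x hx => hlt x _ (hdom.ge hx)
  refine ⟨e, Prod.ext (funext₂ fun x y => propext (he x y).symm)
    (Prod.ext hσe (funext₂ fun x y => propext ?_))⟩
  rw [predModel_pred_iff, hσe]
  constructor
  · rintro ⟨hx, rfl⟩
    exact hdom.ge hx
  · exact fun hxy => ⟨Fin.ne_last_of_lt (hlt x y hxy), hP x y hxy⟩

theorem card_isPredModel [Fintype α] (hα : Fintype.card α = m + 1) (hm : 1 ≤ m) :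
    Nat.card {t : (α → α → Prop) × Perm α × (α → α → Prop) // IsPredModel m t} = (m + 1)! := by
  classical
  have hbij : Bijective fun e : α ≃ Fin (m + 1) =>
      (⟨predModel e, isPredModel_predModel hm e⟩ : {t // IsPredModel m t}) :=
    ⟨fun _ _ h => predModel_injective (congrArg Subtype.val h),
      fun ⟨_, ht⟩ => (exists_predModel_eq hα ht).imp fun _ he => Subtype.ext he⟩
  rw [← Nat.card_eq_of_bijective _ hbij, Nat.card_eq_fintype_card,
    Fintype.card_equiv (Fintype.equivFinOfCardEq hα), hα]

end PredModel

/-- The predecessor theory has exactly `n!` models: the number of triples `(≤, Perm, Pred)`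
on an `n`-element set (`n ≥ 2`), where `≤` is a linear order, `Perm` is a fixed-point-free
permutation, `Pred` is a sub-relation of the graph of `Perm` with exactly `n - 1` pairs, all
compatible with `≤`, is exactly `n!`. -/
theorem stmt18 (n : ℕ) (hn : 2 ≤ n) :
    Nat.card {t : (Fin n → Fin n → Prop) × Equiv.Perm (Fin n) × (Fin n → Fin n → Prop) //
      IsLinearOrder (Fin n) t.1 ∧
      (∀ x, t.2.1 x ≠ x) ∧
      (∀ x y, t.2.2 x y → y = t.2.1 x) ∧
      Nat.card {q : Fin n × Fin n // t.2.2 q.1 q.2} = n - 1 ∧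
      (∀ x y, t.2.2 x y → t.1 x y)} = Nat.factorial n := by
  obtain ⟨m, rfl⟩ : ∃ m, n = m + 1 := ⟨n - 1, by omega⟩
  exact card_isPredModel (Fintype.card_fin _) (by omega)
end
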